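/- arXiv:math/0201313 — 5 statements merged into one kernel-verified Lean document; each statement's English description precedes it below -/
import Mathlib

section
/- The map τ₁ defined on pairs of derivations of the Laurent polynomial ring R = ℂ[t₀^{±1},...,t_N^{±1}] by τ₁(t^r d_a, t^m d_b) = m_a r_b Σ_{p=0}^N m_p t^{r+m} k_p, with values in K = Ω_R/d(R) (the space of 1-forms modulo exact forms), is a 2-cocycle on the Lie algebra D of derivations of R with values in the D-module K; i.e., τ₁(x,y) = -τ₁(y,x) modulo d(R) and the cocycle identity τ₁([x,y],z) + τ₁([y,z],x) + τ₁([z,x],y) = x·τ₁(y,z) + y·τ₁(z,x) + z·τ₁(x,y) holds in K. -/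
open Finsupp

/-- The space of 1-forms `Ω_R` on the `(N+1)`-torus: an element assigns to each
monomial exponent `s ∈ ℤ^{N+1}` the vector of coefficients of `t^s k_p`, `p = 0,…,N`. -/
abbrev Omega (N : ℕ) := (Fin (N + 1) → ℤ) →₀ (Fin (N + 1) → ℂ)

/-- The subspace `d(R)` of exact forms, spanned by
`d(t^m) = Σ_p m_p t^m k_p`. -/
noncomputable def exactForms (N : ℕ) : Submodule ℂ (Omega N) :=
  Submodule.span ℂ { ω | ∃ m : Fin (N + 1) → ℤ,
    ω = Finsupp.single m (fun p => (m p : ℂ)) }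

/-- The cocycle `τ₁(t^r d_a, t^m d_b) = m_a r_b Σ_p m_p t^{r+m} k_p`. -/
noncomputable def tau1 (N : ℕ) (r : Fin (N + 1) → ℤ) (a : Fin (N + 1))
    (m : Fin (N + 1) → ℤ) (b : Fin (N + 1)) : Omega N :=
  ((m a : ℂ) * (r b : ℂ)) • Finsupp.single (r + m) (fun p => (m p : ℂ))

/-- The (Lie-derivative) action of the derivation `t^r d_a` on 1-forms, determined by
`[t^r d_a, t^m k_b] = m_a t^{r+m} k_b + δ_{ab} Σ_p r_p t^{r+m} k_p`. -/
noncomputable def dact (N : ℕ) (r : Fin (N + 1) → ℤ) (a : Fin (N + 1)) (ω : Omega N) : Omega N :=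
  ω.sum fun s v =>
    Finsupp.single (r + s) ((s a : ℂ) • v + (v a) • fun p => (r p : ℂ))

lemma dact_single (N : ℕ) (r : Fin (N + 1) → ℤ) (a : Fin (N + 1)) (s : Fin (N + 1) → ℤ)
    (v : Fin (N + 1) → ℂ) :
    dact N r a (Finsupp.single s v)
      = Finsupp.single (r + s) ((s a : ℂ) • v + (v a) • fun p => (r p : ℂ)) := by
  unfold dact
  rw [Finsupp.sum_single_index]
  simp

/-- τ₁ is a 2-cocycle on the Lie algebra `D` of derivations of the
Laurent polynomial ring with values in `K = Ω_R/d(R)`: it is skew-symmetric modulo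
exact forms, and the 2-cocycle identity
`τ₁([x,y],z) + τ₁([y,z],x) + τ₁([z,x],y) = x·τ₁(y,z) + y·τ₁(z,x) + z·τ₁(x,y)`
holds in `K`, for `x = t^r d_a`, `y = t^m d_b`, `z = t^n d_c`
(here `[t^r d_a, t^m d_b] = m_a t^{r+m} d_b - r_b t^{r+m} d_a` and τ₁ is extended
bilinearly). -/
theorem stmt0 (N : ℕ) (r m n : Fin (N + 1) → ℤ) (a b c : Fin (N + 1)) :
    (tau1 N r a m b + tau1 N m b r a ∈ exactForms N) ∧
    (Submodule.Quotient.mk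
        ((((m a : ℂ) • tau1 N (r + m) b n c - (r b : ℂ) • tau1 N (r + m) a n c)
          + ((n b : ℂ) • tau1 N (m + n) c r a - (m c : ℂ) • tau1 N (m + n) b r a))
          + ((r c : ℂ) • tau1 N (n + r) a m b - (n a : ℂ) • tau1 N (n + r) c m b))
      = (Submodule.Quotient.mk
          (dact N r a (tau1 N m b n c) + dact N m b (tau1 N n c r a)
            + dact N n c (tau1 N r a m b)) : Omega N ⧸ exactForms N)) := by

  constructor
  · have h : tau1 N r a m b + tau1 N m b r a
        = ((m a : ℂ) * (r b : ℂ)) •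
            Finsupp.single (r + m) (fun p => ((r + m) p : ℂ)) := by
      unfold tau1
      rw [show m + r = r + m from add_comm m r, mul_comm ((r b : ℂ)) ((m a : ℂ)),
        Finsupp.smul_single, Finsupp.smul_single, Finsupp.smul_single,
        ← Finsupp.single_add]
      congr 1
      funext p
      simp only [Pi.add_apply, Pi.smul_apply, smul_eq_mul]
      push_cast
      ring
    rw [h]
    exact Submodule.smul_mem _ _ (Submodule.subset_span ⟨r + m, rfl⟩)
  · rw [Submodule.Quotient.eq]
    have e3 : m + (n + r) = r + m + n := by abel
    have e4 : n + (r + m) = r + m + n := by abel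
    have e5 : r + (m + n) = r + m + n := by abel
    have e1 : m + n + r = r + m + n := by abel
    have e2 : n + r + m = r + m + n := by abel
    have key : (((m a : ℂ) • tau1 N (r + m) b n c - (r b : ℂ) • tau1 N (r + m) a n c)
          + ((n b : ℂ) • tau1 N (m + n) c r a - (m c : ℂ) • tau1 N (m + n) b r a))
          + ((r c : ℂ) • tau1 N (n + r) a m b - (n a : ℂ) • tau1 N (n + r) c m b)
        - (dact N r a (tau1 N m b n c) + dact N m b (tau1 N n c r a)
            + dact N n c (tau1 N r a m b))
        = ((m a : ℂ) * (n b : ℂ) * (r c : ℂ) - (n a : ℂ) * (r b : ℂ) * (r c : ℂ)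
            - (n a : ℂ) * (r b : ℂ) * (m c : ℂ) - (n a : ℂ) * (n b : ℂ) * (m c : ℂ)
            - (m a : ℂ) * (r b : ℂ) * (m c : ℂ)) •
            Finsupp.single (r + m + n) (fun p => ((r + m + n) p : ℂ)) := by
      unfold tau1
      simp only [Finsupp.smul_single]
      rw [dact_single, dact_single, dact_single]
      rw [e1, e2, e3, e4, e5]
      simp only [Finsupp.smul_single, ← Finsupp.single_add, ← Finsupp.single_sub,
        ← Finsupp.single_neg]
      congr 1
      funext p
      simp only [Pi.add_apply, Pi.sub_apply, Pi.smul_apply, Pi.neg_apply, smul_eq_mul]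
      push_cast
      ring
    rw [key]
    exact Submodule.smul_mem _ _ (Submodule.subset_span ⟨r + m + n, rfl⟩)
end

section
/- For any γ ∈ ℂ, the linear map ρ_γ from the Virasoro algebra to the quotient of the twisted Heisenberg–Virasoro algebra by the central element C_I, defined by ρ_γ(L̄(n)) = L(n) + γ n I(n) + δ_{n,0} γ C_{LI} and ρ_γ(C̄_L) = C_L + 24γ C_{LI}, is an injective Lie algebra homomorphism. -/
/-!
Expanding `⁅ρ(L̄ n), ρ(L̄ m)⁆` bilinearly, the `I`-terms coming from `⁅L, I⁆` and `⁅I, L⁆` recombine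
into `(n - m) γ (n + m) I(n + m)`, the `C_{LI}`-terms coming from them are absorbed by the shift
`δ_{n,0} γ C_{LI}` of `ρ(L̄ 0)` together with `24γ C_{LI}` in `ρ(C̄_L)`, and the only remaining
discrepancy, `γ² n m ⁅I n, I m⁆`, is a multiple of `C_I` and dies in the quotient.
Since `C_I` is central, the ideal it generates is just `ℂ C_I`, so the projection of `HVir` onto
the span of the `L(n)` and `C_L` (killing `I(n)`, `C_{LI}`, `C_I`) descends to the quotient and is
a left inverse of `ρ`.
-/

theorem LinearMap.map_lie_of_basis {R ι L L' : Type*} [CommRing R] [LieRing L] [LieAlgebra R L]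
    [LieRing L'] [LieAlgebra R L'] (b : Module.Basis ι R L) (f : L →ₗ[R] L')
    (h : ∀ i j, f ⁅b i, b j⁆ = ⁅f (b i), f (b j)⁆) (x y : L) : f ⁅x, y⁆ = ⁅f x, f y⁆ := by
  have := LinearMap.ext_basis b b
    (B := (LieModule.toEnd R L L : L →ₗ[R] Module.End R L).compr₂ f)
    (B' := (LieModule.toEnd R L' L' : L' →ₗ[R] Module.End R L').compl₁₂ f f) h
  exact LinearMap.congr_fun₂ this x y

theorem exists_lieHom_virasoro_of_basis {K V M : Type*} [Field K] [LieRing V] [LieAlgebra K V]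
    [LieRing M] [LieAlgebra K M] (Lb : ℤ → V) (CbL : V) (bV : Module.Basis (ℤ ⊕ Unit) K V)
    (hv1 : ∀ n, bV (Sum.inl n) = Lb n) (hv2 : bV (Sum.inr ()) = CbL)
    (hVLL : ∀ n m : ℤ, ⁅Lb n, Lb m⁆ =
      ((n : K) - m) • Lb (n + m) + (if n = -m then ((n : K)^3 - n) / 12 else 0) • CbL)
    (hVC : ∀ x : V, ⁅CbL, x⁆ = 0) (ℓ : ℤ → M) (c : M)
    (hℓ : ∀ n m : ℤ, ⁅ℓ n, ℓ m⁆ =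
      ((n : K) - m) • ℓ (n + m) + (if n = -m then ((n : K)^3 - n) / 12 else 0) • c)
    (hc : ∀ x : M, ⁅c, x⁆ = 0) :
    ∃ ρ : V →ₗ⁅K⁆ M, (∀ n, ρ (Lb n) = ℓ n) ∧ ρ CbL = c := by
  set f := bV.constr K (Sum.elim ℓ fun _ => c)
  have hfL (n : ℤ) : f (Lb n) = ℓ n := by rw [← hv1, Module.Basis.constr_basis, Sum.elim_inl]
  have hfC : f CbL = c := by rw [← hv2, Module.Basis.constr_basis, Sum.elim_inr]
  have hVC' (x : V) : ⁅x, CbL⁆ = 0 := by rw [← lie_skew, hVC, neg_zero]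
  have hc' (x : M) : ⁅x, c⁆ = 0 := by rw [← lie_skew, hc, neg_zero]
  refine ⟨{ f with map_lie' := f.map_lie_of_basis bV ?_ _ _ }, hfL, hfC⟩
  rintro (n | ⟨⟩) (m | ⟨⟩) <;> simp only [hv1, hv2]
  · rw [hVLL, map_add, map_smul, map_smul, hfL, hfL, hfL, hfC, hℓ]
  · rw [hVC', hfC, hc', map_zero]
  all_goals rw [hVC, hfC, hc, map_zero]

theorem LieSubmodule.coe_lieSpan_singleton_eq_span {R L M : Type*} [CommRing R] [LieRing L]
    [LieAlgebra R L] [AddCommGroup M] [Module R M] [LieRingModule L M] [LieModule R L M] {m : M}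
    (hm : ∀ x : L, ⁅x, m⁆ = 0) : (lieSpan R L {m} : Submodule R M) = Submodule.span R {m} := by
  refine le_antisymm ?_ (submodule_span_le_lieSpan ..)
  let N : LieSubmodule R L M :=
    { Submodule.span R {m} with
      lie_mem := fun {x n} hn => by
        obtain ⟨c, rfl⟩ := Submodule.mem_span_singleton.mp hn
        simp [hm] }
  exact lieSpan_le (N := N) |>.mpr
    (Set.singleton_subset_iff.mpr (Submodule.mem_span_singleton_self m))

structure TwistedHeisenbergVirasoroRelations (K : Type*) {HV : Type*} [Field K] [LieRing HV]
    [LieAlgebra K HV] (L I : ℤ → HV) (CL CLI CI : HV) : Prop where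
  lie_L_L : ∀ n m : ℤ, ⁅L n, L m⁆ =
    ((n : K) - m) • L (n + m) + (if n = -m then ((n : K)^3 - n) / 12 else 0) • CL
  lie_L_I : ∀ n m : ℤ, ⁅L n, I m⁆ =
    (-(m : K)) • I (n + m) - (if n = -m then (n : K)^2 + n else 0) • CLI
  lie_I_I : ∀ n m : ℤ, ⁅I n, I m⁆ = (if n = -m then (n : K) else 0) • CI
  lie_CL : ∀ x : HV, ⁅CL, x⁆ = 0
  lie_CLI : ∀ x : HV, ⁅CLI, x⁆ = 0
  lie_CI : ∀ x : HV, ⁅CI, x⁆ = 0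

section TwistedHeisenbergVirasoro

variable {K HV : Type*} [Field K] [LieRing HV] [LieAlgebra K HV]

def twistedVirasoroL (L I : ℤ → HV) (CLI : HV) (γ : K) (n : ℤ) : HV :=
  L n + (γ * n) • I n + (if n = 0 then γ else 0) • CLI

namespace TwistedHeisenbergVirasoroRelations

variable {L I : ℤ → HV} {CL CLI CI : HV}

theorem lie_CLI_right (h : TwistedHeisenbergVirasoroRelations K L I CL CLI CI) (x : HV) :
    ⁅x, CLI⁆ = 0 := by
  rw [← lie_skew, h.lie_CLI, neg_zero]

theorem lie_twistedVirasoroL [CharZero K] (h : TwistedHeisenbergVirasoroRelations K L I CL CLI CI)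
    (γ : K) (n m : ℤ) :
    ⁅twistedVirasoroL L I CLI γ n, twistedVirasoroL L I CLI γ m⁆ =
      ((n : K) - m) • twistedVirasoroL L I CLI γ (n + m) +
        (if n = -m then ((n : K)^3 - n) / 12 else 0) • (CL + (24 * γ) • CLI) +
        (if n = -m then -(γ ^ 2 * n ^ 3) else 0) • CI := by
  have hIL : ⁅I n, L m⁆ = (n : K) • I (n + m) + (if m = -n then (m : K)^2 + m else 0) • CLI := by
    rw [← lie_skew, h.lie_L_I, add_comm m]
    module
  simp only [twistedVirasoroL, lie_add, add_lie, lie_smul, smul_lie, h.lie_L_L, h.lie_L_I, hIL,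
    h.lie_I_I, h.lie_CLI, h.lie_CLI_right, smul_zero, add_zero]
  by_cases hnm : n = -m
  · subst hnm
    simp only [neg_neg, neg_add_cancel, ↓reduceIte, Int.cast_neg, Int.cast_zero]
    module
  · have h1 : n + m ≠ 0 := fun h => hnm (by omega)
    have h2 : ¬ m = -n := fun h => hnm (by omega)
    simp only [if_neg hnm, if_neg h2, if_neg h1]
    module

open LieSubmodule.Quotient in
theorem lie_mk'_twistedVirasoroL [CharZero K]
    (h : TwistedHeisenbergVirasoroRelations K L I CL CLI CI)
    {N : LieIdeal K HV} (hN : CI ∈ N) (γ : K) (n m : ℤ) :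
    ⁅mk' N (twistedVirasoroL L I CLI γ n), mk' N (twistedVirasoroL L I CLI γ m)⁆ =
      ((n : K) - m) • mk' N (twistedVirasoroL L I CLI γ (n + m)) +
        (if n = -m then ((n : K)^3 - n) / 12 else 0) • mk' N (CL + (24 * γ) • CLI) := by
  rw [mk'_apply, mk'_apply, ← mk_bracket, ← mk'_apply, h.lie_twistedVirasoroL, map_add, map_add,
    map_smul, map_smul, map_smul, (mk_eq_zero N).mpr hN, smul_zero, add_zero]

open LieSubmodule.Quotient in
theorem lie_mk'_central (h : TwistedHeisenbergVirasoroRelations K L I CL CLI CI)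
    (N : LieIdeal K HV) (γ : K) (x : HV ⧸ N) : ⁅mk' N (CL + (24 * γ) • CLI), x⁆ = 0 := by
  obtain ⟨y, rfl⟩ := surjective_mk' N x
  rw [mk'_apply, mk'_apply, ← mk_bracket, add_lie, smul_lie, h.lie_CL, h.lie_CLI, smul_zero,
    add_zero, ← mk'_apply, map_zero]

end TwistedHeisenbergVirasoroRelations

open LieSubmodule LieSubmodule.Quotient in
theorem exists_linearMap_mk'_twistedVirasoroL {L I : ℤ → HV} {CL CLI CI : HV}
    (hCI : ∀ x : HV, ⁅CI, x⁆ = 0) (bHV : Module.Basis (ℤ ⊕ ℤ ⊕ Fin 3) K HV)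
    (hb1 : ∀ n, bHV (Sum.inl n) = L n) (hb2 : ∀ n, bHV (Sum.inr (Sum.inl n)) = I n)
    (hb3 : bHV (Sum.inr (Sum.inr 0)) = CL) (hb4 : bHV (Sum.inr (Sum.inr 1)) = CLI)
    (hb5 : bHV (Sum.inr (Sum.inr 2)) = CI) {V : Type*} [AddCommGroup V] [Module K V]
    (ℓ : ℤ → V) (c : V) (γ : K) :
    ∃ π : HV ⧸ (lieSpan K HV {CI} : LieIdeal K HV) →ₗ[K] V,
      (∀ n, π (mk' _ (twistedVirasoroL L I CLI γ n)) = ℓ n) ∧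
        π (mk' _ (CL + (24 * γ) • CLI)) = c := by
  set φ := bHV.constr K (Sum.elim ℓ (Sum.elim 0 ![c, 0, 0]))
  have hφ (i) : φ (bHV i) = Sum.elim ℓ (Sum.elim 0 ![c, 0, 0]) i := bHV.constr_basis K _ i
  have hker : (lieSpan K HV {CI}).toSubmodule ≤ LinearMap.ker φ := by
    rw [coe_lieSpan_singleton_eq_span (fun x => by rw [← lie_skew, hCI, neg_zero]),
      Submodule.span_singleton_le_iff_mem, LinearMap.mem_ker, ← hb5, hφ]
    rfl
  let π := Submodule.liftQ _ φ hker
  have hπ (x : HV) : π (mk' _ x) = φ x := rfl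
  refine ⟨π, fun n => ?_, ?_⟩
  · rw [hπ, twistedVirasoroL, map_add, map_add, map_smul, map_smul, ← hb1, ← hb2, ← hb4, hφ, hφ,
      hφ]
    simp
  · rw [hπ, map_add, map_smul, ← hb3, ← hb4, hφ, hφ]
    simp

end TwistedHeisenbergVirasoro

/-- For any `γ ∈ ℂ`, the map `ρ_γ` from the Virasoro algebra to the
quotient of the twisted Heisenberg–Virasoro algebra by (the ideal generated by) the
central element `C_I`, defined by `ρ_γ(L̄(n)) = L(n) + γn I(n) + δ_{n,0} γ C_{LI}` and
`ρ_γ(C̄_L) = C_L + 24γ C_{LI}`, is an injective Lie algebra homomorphism. -/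
theorem stmt1
    (HV : Type) [LieRing HV] [LieAlgebra ℂ HV]
    (L I : ℤ → HV) (CL CLI CI : HV)
    (bHV : Module.Basis (ℤ ⊕ ℤ ⊕ Fin 3) ℂ HV)
    (hb1 : ∀ n, bHV (Sum.inl n) = L n)
    (hb2 : ∀ n, bHV (Sum.inr (Sum.inl n)) = I n)
    (hb3 : bHV (Sum.inr (Sum.inr 0)) = CL)
    (hb4 : bHV (Sum.inr (Sum.inr 1)) = CLI)
    (hb5 : bHV (Sum.inr (Sum.inr 2)) = CI)
    (hLL : ∀ n m : ℤ, ⁅L n, L m⁆ =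
      ((n : ℂ) - m) • L (n + m) + (if n = -m then ((n : ℂ)^3 - n) / 12 else 0) • CL)
    (hLI : ∀ n m : ℤ, ⁅L n, I m⁆ =
      (-(m : ℂ)) • I (n + m) - (if n = -m then (n : ℂ)^2 + n else 0) • CLI)
    (hII : ∀ n m : ℤ, ⁅I n, I m⁆ = (if n = -m then (n : ℂ) else 0) • CI)
    (hCL : ∀ x : HV, ⁅CL, x⁆ = 0) (hCLI : ∀ x : HV, ⁅CLI, x⁆ = 0) (hCI : ∀ x : HV, ⁅CI, x⁆ = 0)
    (Vir : Type) [LieRing Vir] [LieAlgebra ℂ Vir]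
    (Lb : ℤ → Vir) (CbL : Vir)
    (bV : Module.Basis (ℤ ⊕ Unit) ℂ Vir)
    (hv1 : ∀ n, bV (Sum.inl n) = Lb n)
    (hv2 : bV (Sum.inr ()) = CbL)
    (hVLL : ∀ n m : ℤ, ⁅Lb n, Lb m⁆ =
      ((n : ℂ) - m) • Lb (n + m) + (if n = -m then ((n : ℂ)^3 - n) / 12 else 0) • CbL)
    (hVC : ∀ x : Vir, ⁅CbL, x⁆ = 0)
    (γ : ℂ) :
    ∃ ρ : Vir →ₗ⁅ℂ⁆ HV ⧸ (LieSubmodule.lieSpan ℂ HV {CI} : LieIdeal ℂ HV),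
      (∀ n : ℤ, ρ (Lb n) = LieSubmodule.Quotient.mk' _
        (L n + (γ * n) • I n + (if n = 0 then γ • CLI else 0))) ∧
      ρ CbL = LieSubmodule.Quotient.mk' _ (CL + (24 * γ) • CLI) ∧
      Function.Injective ρ := by
  have hrel : TwistedHeisenbergVirasoroRelations ℂ L I CL CLI CI :=
    ⟨hLL, hLI, hII, hCL, hCLI, hCI⟩
  let N : LieIdeal ℂ HV := LieSubmodule.lieSpan ℂ HV {CI}
  obtain ⟨ρ, hρL, hρC⟩ := exists_lieHom_virasoro_of_basis Lb CbL bV hv1 hv2 hVLL hVC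
    (fun n => LieSubmodule.Quotient.mk' N (twistedVirasoroL L I CLI γ n))
    (LieSubmodule.Quotient.mk' N (CL + (24 * γ) • CLI))
    (hrel.lie_mk'_twistedVirasoroL (LieSubmodule.subset_lieSpan (Set.mem_singleton CI)) γ)
    (hrel.lie_mk'_central N γ)
  obtain ⟨π, hπL, hπC⟩ :=
    exists_linearMap_mk'_twistedVirasoroL hCI bHV hb1 hb2 hb3 hb4 hb5 Lb CbL γ
  have hπρ : π ∘ₗ ρ.toLinearMap = LinearMap.id := by
    refine bV.ext fun i => ?_
    rcases i with n | ⟨⟩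
    · rw [LinearMap.comp_apply, LieHom.coe_toLinearMap, hv1, hρL, hπL, LinearMap.id_apply]
    · rw [LinearMap.comp_apply, LieHom.coe_toLinearMap, hv2, hρC, hπC, LinearMap.id_apply]
  refine ⟨ρ, fun n => ?_, hρC, Function.LeftInverse.injective (g := π) (LinearMap.congr_fun hπρ)⟩
  rw [hρL, twistedVirasoroL, ite_smul, zero_smul]
end

section
/- In the twisted Heisenberg–Virasoro algebra, the elements I(0), C_L, C_{LI}, C_I span the center: an element is central if and only if it is a linear combination of I(0), C_L, C_{LI}, C_I. -/
/-!
`ad (L 0)` acts diagonally on the standard basis, by minus the degree, so an element commuting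
with `L 0` lies in the span of the degree-zero basis vectors `L 0, I 0, C_L, C_{LI}, C_I`. The
last four are central, and bracketing with `L 1` kills the coefficient of `L 0`.
-/

open Submodule

theorem Module.Basis.repr_apply_of_apply_eq_smul {ι R M : Type*} [CommSemiring R]
    [AddCommMonoid M] [Module R M] (b : Module.Basis ι R M) {T : M →ₗ[R] M} {lam : ι → R}
    (hT : ∀ i, T (b i) = lam i • b i) (x : M) (i : ι) :
    b.repr (T x) i = lam i * b.repr x i := by
  classical
  have : b.coord i ∘ₗ T = lam i • b.coord i := b.ext fun j => by
    by_cases h : j = i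
    · subst h; simp [hT]
    · simp [hT, Ne.symm h]
  simpa using LinearMap.congr_fun this x

theorem Module.Basis.mem_span_image_of_apply_eq_smul {ι R M : Type*} [CommSemiring R]
    [NoZeroDivisors R] [AddCommMonoid M] [Module R M] (b : Module.Basis ι R M)
    {T : M →ₗ[R] M} {lam : ι → R} (hT : ∀ i, T (b i) = lam i • b i) {x : M}
    (hx : T x = 0) :
    x ∈ span R (b '' {i | lam i = 0}) := by
  refine b.mem_span_image.mpr fun i hi => ?_
  have h := b.repr_apply_of_apply_eq_smul hT x i
  rw [hx, map_zero, Finsupp.zero_apply, eq_comm, mul_eq_zero] at h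
  exact h.resolve_right (Finsupp.mem_support_iff.mp hi)

section LieAlgebra

variable {R L : Type*} [CommRing R] [LieRing L] [LieAlgebra R L]

theorem lie_eq_zero_of_forall_basis {ι : Type*} (b : Module.Basis ι R L) {x : L}
    (h : ∀ i, ⁅x, b i⁆ = 0) (y : L) : ⁅x, y⁆ = 0 :=
  LinearMap.congr_fun (b.ext (f₁ := LieAlgebra.ad R L x) (f₂ := 0) h) y

theorem lie_eq_zero_of_mem_span {s : Set L} (hs : ∀ z ∈ s, ∀ y : L, ⁅z, y⁆ = 0) {x : L}
    (hx : x ∈ span R s) (y : L) : ⁅x, y⁆ = 0 :=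
  (span_le (p := LinearMap.ker ((LieAlgebra.ad R L : L →ₗ[R] Module.End R L).flip y))).mpr
    (fun z hz => hs z hz y) hx

end LieAlgebra

section TwistedHeisenbergVirasoro

variable {HV : Type*} [LieRing HV] [LieAlgebra ℂ HV] {L I : ℤ → HV} {CL CLI CI : HV}
  (b : Module.Basis (ℤ ⊕ ℤ ⊕ Fin 3) ℂ HV)

def twistedHVirDegree : ℤ ⊕ ℤ ⊕ Fin 3 → ℤ :=
  Sum.elim id (Sum.elim id 0)

theorem lie_I_zero_eq_zero (hbL : ∀ n, b (.inl n) = L n) (hbI : ∀ n, b (.inr (.inl n)) = I n)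
    (hbC : ∀ k, ∀ y : HV, ⁅b (.inr (.inr k)), y⁆ = 0)
    (hLI : ∀ n m : ℤ, ⁅L n, I m⁆ =
      (-(m : ℂ)) • I (n + m) - (if n = -m then (n : ℂ)^2 + n else 0) • CLI)
    (hII : ∀ n m : ℤ, ⁅I n, I m⁆ = (if n = -m then (n : ℂ) else 0) • CI) (y : HV) :
    ⁅I 0, y⁆ = 0 := by
  refine lie_eq_zero_of_forall_basis b (fun i => ?_) y
  rcases i with n | n | k
  · rw [hbL, ← lie_skew, hLI n 0]
    rcases eq_or_ne n 0 with rfl | hn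
    · simp
    · simp [hn]
  · simp [hbI, hII]
  · rw [← lie_skew, hbC, neg_zero]

theorem lie_L_zero_basis_eq_smul (hbL : ∀ n, b (.inl n) = L n)
    (hbI : ∀ n, b (.inr (.inl n)) = I n)
    (hbC : ∀ k, ∀ y : HV, ⁅b (.inr (.inr k)), y⁆ = 0)
    (hLL : ∀ n m : ℤ, ⁅L n, L m⁆ =
      ((n : ℂ) - m) • L (n + m) + (if n = -m then ((n : ℂ)^3 - n) / 12 else 0) • CL)
    (hLI : ∀ n m : ℤ, ⁅L n, I m⁆ =
      (-(m : ℂ)) • I (n + m) - (if n = -m then (n : ℂ)^2 + n else 0) • CLI) (i : ℤ ⊕ ℤ ⊕ Fin 3) :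
    ⁅L 0, b i⁆ = -(twistedHVirDegree i : ℂ) • b i := by
  rcases i with n | n | k
  · rcases eq_or_ne n 0 with rfl | hn
    · simp [hbL, twistedHVirDegree]
    · simp [hbL, hLL, twistedHVirDegree, (neg_ne_zero.mpr hn).symm]
  · rcases eq_or_ne n 0 with rfl | hn
    · simp [hbI, hLI, twistedHVirDegree]
    · simp [hbI, hLI, twistedHVirDegree, (neg_ne_zero.mpr hn).symm]
  · rw [← lie_skew, hbC]; simp [twistedHVirDegree]

theorem mem_span_of_lie_L_zero_eq_zero (hbL : ∀ n, b (.inl n) = L n)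
    (hbI : ∀ n, b (.inr (.inl n)) = I n) (hbCL : b (.inr (.inr 0)) = CL)
    (hbCLI : b (.inr (.inr 1)) = CLI) (hbCI : b (.inr (.inr 2)) = CI)
    (hbC : ∀ k, ∀ y : HV, ⁅b (.inr (.inr k)), y⁆ = 0)
    (hLL : ∀ n m : ℤ, ⁅L n, L m⁆ =
      ((n : ℂ) - m) • L (n + m) + (if n = -m then ((n : ℂ)^3 - n) / 12 else 0) • CL)
    (hLI : ∀ n m : ℤ, ⁅L n, I m⁆ =
      (-(m : ℂ)) • I (n + m) - (if n = -m then (n : ℂ)^2 + n else 0) • CLI)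
    {x : HV} (hx : ⁅L 0, x⁆ = 0) :
    x ∈ span ℂ {L 0, I 0, CL, CLI, CI} := by
  refine span_mono ?_ <| b.mem_span_image_of_apply_eq_smul (T := LieAlgebra.ad ℂ HV (L 0))
    (lie_L_zero_basis_eq_smul b hbL hbI hbC hLL hLI) hx
  rintro _ ⟨i | i | k, hi, rfl⟩
  · obtain rfl : i = 0 := by simpa [twistedHVirDegree] using hi
    simp [hbL]
  · obtain rfl : i = 0 := by simpa [twistedHVirDegree] using hi
    simp [hbI]
  · fin_cases k <;> simp [hbCL, hbCLI, hbCI]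

end TwistedHeisenbergVirasoro

/-- In the twisted Heisenberg–Virasoro algebra, the elements
`I(0), C_L, C_{LI}, C_I` span the center: an element is central if and only if it is a
linear combination of `I(0), C_L, C_{LI}, C_I`. -/
theorem stmt2
    (HV : Type) [LieRing HV] [LieAlgebra ℂ HV]
    (L I : ℤ → HV) (CL CLI CI : HV)
    (bHV : Module.Basis (ℤ ⊕ ℤ ⊕ Fin 3) ℂ HV)
    (hb1 : ∀ n, bHV (Sum.inl n) = L n)
    (hb2 : ∀ n, bHV (Sum.inr (Sum.inl n)) = I n)
    (hb3 : bHV (Sum.inr (Sum.inr 0)) = CL)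
    (hb4 : bHV (Sum.inr (Sum.inr 1)) = CLI)
    (hb5 : bHV (Sum.inr (Sum.inr 2)) = CI)
    (hLL : ∀ n m : ℤ, ⁅L n, L m⁆ =
      ((n : ℂ) - m) • L (n + m) + (if n = -m then ((n : ℂ)^3 - n) / 12 else 0) • CL)
    (hLI : ∀ n m : ℤ, ⁅L n, I m⁆ =
      (-(m : ℂ)) • I (n + m) - (if n = -m then (n : ℂ)^2 + n else 0) • CLI)
    (hII : ∀ n m : ℤ, ⁅I n, I m⁆ = (if n = -m then (n : ℂ) else 0) • CI)
    (hCL : ∀ x : HV, ⁅CL, x⁆ = 0) (hCLI : ∀ x : HV, ⁅CLI, x⁆ = 0)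
    (hCI : ∀ x : HV, ⁅CI, x⁆ = 0)
    (x : HV) :
    (∀ y : HV, ⁅x, y⁆ = 0) ↔
      x ∈ Submodule.span ℂ ({I 0, CL, CLI, CI} : Set HV) := by
  have hbC : ∀ k, ∀ y : HV, ⁅bHV (.inr (.inr k)), y⁆ = 0 := by
    intro k
    fin_cases k
    exacts [hb3 ▸ hCL, hb4 ▸ hCLI, hb5 ▸ hCI]
  have hspan : ∀ z ∈ span ℂ {I 0, CL, CLI, CI}, ∀ y : HV, ⁅z, y⁆ = 0 := by
    refine fun z => lie_eq_zero_of_mem_span ?_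
    rintro _ (rfl | rfl | rfl | rfl)
    exacts [lie_I_zero_eq_zero bHV hb1 hb2 hbC hLI hII, hCL, hCLI, hCI]
  refine ⟨fun hx => ?_, hspan x⟩
  have hx₀ : ⁅L 0, x⁆ = 0 := by rw [← lie_skew, hx, neg_zero]
  obtain ⟨a, z, hz, rfl⟩ := mem_span_insert.mp <|
    mem_span_of_lie_L_zero_eq_zero bHV hb1 hb2 hb3 hb4 hb5 hbC hLL hLI hx₀
  have ha : a = 0 := by
    have h := hx (L 1)
    rw [add_lie, smul_lie, hspan z hz, add_zero, hLL 0 1] at h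
    simpa [hb1 1 ▸ bHV.ne_zero (.inl 1)] using h
  simpa [ha] using hz
end

section
/- The bracket [f₁ g₁ + ω₁, f₂ g₂ + ω₂] = f₁f₂[g₁,g₂] + (g₁|g₂) f₂ d(f₁) on (R ⊗ ġ) ⊕ K (with K central) satisfies the Jacobi identity, using invariance of the form (·|·) on ġ. -/
/-!
The `R ⊗ ġ`-component of the Jacobiator is `f₁f₂f₃ ⊗` (Jacobi sum in `ġ`), hence zero. For the
`K`-component, symmetry and invariance of the form make the three coefficients
`([g₁,g₂]|g₃)`, `([g₂,g₃]|g₁)`, `([g₃,g₁]|g₂)` equal, and the Leibniz rule gives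
`f₃ d(f₁f₂) + f₁ d(f₂f₃) + f₂ d(f₃f₁) = 2 d(f₁f₂f₃)`, which is exact.
-/

open Finsupp TensorProduct

/-- The Laurent polynomial ring `R = ℂ[t₀^{±1},…,t_N^{±1}]`. -/
abbrev Rring (N : ℕ) := (Fin (N + 1) → ℤ) →₀ ℂ

/-- The product of Laurent polynomials. -/
noncomputable def rmul (N : ℕ) (f g : Rring N) : Rring N :=
  f.sum fun s c => g.sum fun s' c' => Finsupp.single (s + s') (c * c')

/-- The differential `d : R → Ω_R`. -/
noncomputable def dR (N : ℕ) (f : Rring N) : Omega N :=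
  f.sum fun s c => Finsupp.single s (c • fun p => (s p : ℂ))

/-- The `R`-module structure on `Ω_R`. -/
noncomputable def rsmul (N : ℕ) (f : Rring N) (ω : Omega N) : Omega N :=
  f.sum fun s c => ω.sum fun s' v => Finsupp.single (s + s') (c • v)

/-- The subspace `d(R)` of exact forms. -/
noncomputable def exactSub (N : ℕ) : Submodule ℂ (Omega N) :=
  Submodule.span ℂ (Set.range (dR N))

section LaurentCalculus

variable {N : ℕ}

@[simp]
lemma rmul_single_single (s s' : Fin (N + 1) → ℤ) (c c' : ℂ) :
    rmul N (single s c) (single s' c') = single (s + s') (c * c') := by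
  simp [rmul]

@[simp]
lemma rmul_zero_left (f : Rring N) : rmul N 0 f = 0 := by simp [rmul]

@[simp]
lemma rmul_zero_right (f : Rring N) : rmul N f 0 = 0 := by simp [rmul]

@[simp]
lemma rmul_add_left (f f' g : Rring N) : rmul N (f + f') g = rmul N f g + rmul N f' g := by
  simp only [rmul]
  exact sum_add_index' (by simp) fun _ _ _ => by simp [add_mul, single_add]

@[simp]
lemma rmul_add_right (f g g' : Rring N) : rmul N f (g + g') = rmul N f g + rmul N f g' := by
  simp only [rmul, ← sum_add]
  refine sum_congr fun s _ => ?_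
  exact sum_add_index' (by simp) fun _ _ _ => by simp [mul_add, single_add]

@[simp]
lemma dR_single (s : Fin (N + 1) → ℤ) (c : ℂ) :
    dR N (single s c) = single s (c • fun p => (s p : ℂ)) := by
  simp [dR]

@[simp]
lemma dR_zero : dR N 0 = 0 := by simp [dR]

@[simp]
lemma dR_add (f f' : Rring N) : dR N (f + f') = dR N f + dR N f' := by
  simp only [dR]
  exact sum_add_index' (by simp) fun _ _ _ => by simp [add_smul, single_add]

@[simp]
lemma rsmul_single_single (s s' : Fin (N + 1) → ℤ) (c : ℂ) (v : Fin (N + 1) → ℂ) :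
    rsmul N (single s c) (single s' v) = single (s + s') (c • v) := by
  simp [rsmul]

@[simp]
lemma rsmul_zero_left (ω : Omega N) : rsmul N 0 ω = 0 := by simp [rsmul]

@[simp]
lemma rsmul_zero_right (f : Rring N) : rsmul N f 0 = 0 := by simp [rsmul]

@[simp]
lemma rsmul_add_left (f f' : Rring N) (ω : Omega N) :
    rsmul N (f + f') ω = rsmul N f ω + rsmul N f' ω := by
  simp only [rsmul]
  exact sum_add_index' (by simp) fun _ _ _ => by simp [sum_add, add_smul, single_add]

@[simp]
lemma rsmul_add_right (f : Rring N) (ω ω' : Omega N) :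
    rsmul N f (ω + ω') = rsmul N f ω + rsmul N f ω' := by
  simp only [rsmul, ← sum_add]
  refine sum_congr fun s _ => ?_
  exact sum_add_index' (by simp) fun _ _ _ => by simp [smul_add, single_add]

lemma rsmul_dR_rmul_cyclic_sum (f₁ f₂ f₃ : Rring N) :
    rsmul N f₃ (dR N (rmul N f₁ f₂)) + rsmul N f₁ (dR N (rmul N f₂ f₃))
      + rsmul N f₂ (dR N (rmul N f₃ f₁))
    = (2 : ℂ) • dR N (rmul N (rmul N f₁ f₂) f₃) := by
  induction f₁ using Finsupp.induction_linear with
  | zero => simp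
  | add f f' hf hf' =>
    simp only [rmul_add_left, rmul_add_right, dR_add, rsmul_add_left, rsmul_add_right]
    linear_combination (norm := module) hf + hf'
  | single s₁ c₁ =>
  induction f₂ using Finsupp.induction_linear with
  | zero => simp
  | add f f' hf hf' =>
    simp only [rmul_add_left, rmul_add_right, dR_add, rsmul_add_left, rsmul_add_right]
    linear_combination (norm := module) hf + hf'
  | single s₂ c₂ =>
  induction f₃ using Finsupp.induction_linear with
  | zero => simp
  | add f f' hf hf' =>
    simp only [rmul_add_left, rmul_add_right, dR_add, rsmul_add_left, rsmul_add_right]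
    linear_combination (norm := module) hf + hf'
  | single s₃ c₃ =>
    -- on monomials: `(s₁ + s₂) + (s₂ + s₃) + (s₃ + s₁) = 2 (s₁ + s₂ + s₃)`
    have e₁ : s₃ + (s₁ + s₂) = s₁ + s₂ + s₃ := add_comm _ _
    have e₂ : s₁ + (s₂ + s₃) = s₁ + s₂ + s₃ := (add_assoc _ _ _).symm
    have e₃ : s₂ + (s₃ + s₁) = s₁ + s₂ + s₃ := by abel
    simp only [rmul_single_single, dR_single, rsmul_single_single, e₁, e₂, e₃, ← single_add,
      smul_single]
    congr 1
    ext p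
    simp only [Pi.add_apply, Int.cast_add, Pi.smul_apply, smul_eq_mul]
    ring

lemma dR_mem_exactSub (f : Rring N) : dR N f ∈ exactSub N :=
  Submodule.subset_span ⟨f, rfl⟩

end LaurentCalculus

lemma lie_lie_cyclic_sum_eq_zero {L : Type*} [LieRing L] (x y z : L) :
    ⁅⁅x, y⁆, z⁆ + ⁅⁅y, z⁆, x⁆ + ⁅⁅z, x⁆, y⁆ = 0 := by
  rw [← lie_skew ⁅x, y⁆ z, ← lie_skew ⁅y, z⁆ x, ← lie_skew ⁅z, x⁆ y]
  linear_combination (norm := abel) -lie_jacobi x y z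

lemma apply_lie_cyclic {L R : Type*} [Bracket L L] (B : L → L → R)
    (hsymm : ∀ x y, B x y = B y x) (hinv : ∀ x y z, B ⁅x, y⁆ z = B x ⁅y, z⁆) (x y z : L) :
    B ⁅y, z⁆ x = B ⁅x, y⁆ z := by
  rw [hsymm, hinv]

/-- The bracket
`[f₁g₁ + ω₁, f₂g₂ + ω₂] = f₁f₂[g₁,g₂] + (g₁|g₂) f₂ d(f₁)` on `(R ⊗ ġ) ⊕ K` (with `K`
central) satisfies the Jacobi identity, using the invariance of the symmetric form on
`ġ`.  On pure tensors the Jacobiator has `R ⊗ ġ`-component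
`f₁f₂f₃ ⊗ ([[g₁,g₂],g₃] + [[g₂,g₃],g₁] + [[g₃,g₁],g₂])` and `K`-component
`B([g₁,g₂],g₃) f₃ d(f₁f₂) + B([g₂,g₃],g₁) f₁ d(f₂f₃) + B([g₃,g₁],g₂) f₂ d(f₃f₁)`,
and both vanish (the second one in `K = Ω_R/d(R)`). -/
theorem stmt8 (N : ℕ) (g : Type) [LieRing g] [LieAlgebra ℂ g]
    (B : g →ₗ[ℂ] g →ₗ[ℂ] ℂ)
    (hsymm : ∀ x y : g, B x y = B y x)
    (hinv : ∀ x y z : g, B ⁅x, y⁆ z = B x ⁅y, z⁆)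
    (f₁ f₂ f₃ : Rring N) (g₁ g₂ g₃ : g) :
    (rmul N (rmul N f₁ f₂) f₃) ⊗ₜ[ℂ] (⁅⁅g₁, g₂⁆, g₃⁆ + ⁅⁅g₂, g₃⁆, g₁⁆ + ⁅⁅g₃, g₁⁆, g₂⁆)
        = (0 : Rring N ⊗[ℂ] g) ∧
    (Submodule.Quotient.mk
        (B ⁅g₁, g₂⁆ g₃ • rsmul N f₃ (dR N (rmul N f₁ f₂))
          + B ⁅g₂, g₃⁆ g₁ • rsmul N f₁ (dR N (rmul N f₂ f₃))
          + B ⁅g₃, g₁⁆ g₂ • rsmul N f₂ (dR N (rmul N f₃ f₁)))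
      : Omega N ⧸ exactSub N) = 0 := by
  refine ⟨by rw [lie_lie_cyclic_sum_eq_zero, tmul_zero], ?_⟩
  have hB := apply_lie_cyclic (fun x y => B x y) hsymm hinv
  rw [hB g₁ g₂ g₃, (hB g₂ g₃ g₁).trans (hB g₁ g₂ g₃), ← smul_add, ← smul_add,
    rsmul_dR_rmul_cyclic_sum, smul_smul, Submodule.Quotient.mk_eq_zero]
  exact Submodule.smul_mem _ _ (dR_mem_exactSub _)
end

section
/- Let M be a module over a vertex algebra V with translation operator D_M such that Y_M(a,z) acting on any vector has only finitely many negative powers, and suppose a finite sum Σ_s z^{-s} Y_M(a^s, z) = 0 with a^s ∈ V. If M is a faithful V-module, then a^s = 0 for all s. (Key step: applying [D_M, ·] repeatedly yields Σ_s s^m Y_M(a^s,z) z^{-s} = 0 for all m ≥ 0, and a Vandermonde argument gives Y_M(a^s,z) = 0 for each s.) -/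
/-- Generalized binomial coefficient `C(m, j)` for `m ∈ ℤ`, as a complex number. -/
noncomputable def zchoose (m : ℤ) (j : ℕ) : ℂ :=
  (∏ i ∈ Finset.range j, ((m : ℂ) - i)) / (j.factorial : ℂ)

/-- A vertex algebra structure on a complex vector space `V`: `n`-th products
`a_{(n)}b` (bilinear), a vacuum vector `𝟙`, an infinitesimal translation operator `D`,
satisfying truncation, the vacuum and self-replication axioms, the translation
(derivation) axiom `[D, Y(a,z)] = Y(Da, z)`, and locality in the equivalent form of
the Borcherds identity. -/
structure VertexAlg (V : Type) [AddCommGroup V] [Module ℂ V] where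
  mul : ℤ → V →ₗ[ℂ] V →ₗ[ℂ] V
  vac : V
  T : V →ₗ[ℂ] V
  trunc : ∀ a b : V, ∃ M : ℤ, ∀ n ≥ M, mul n a b = 0
  vac_mul : ∀ (n : ℤ) (a : V), mul n vac a = if n = -1 then a else 0
  mul_vac_nonneg : ∀ (n : ℤ) (a : V), 0 ≤ n → mul n a vac = 0
  mul_vac : ∀ a : V, mul (-1) a vac = a
  T_def : ∀ a : V, T a = mul (-2) a vac
  T_der : ∀ (n : ℤ) (a b : V), T (mul n a b) = mul n (T a) b + mul n a (T b)
  borcherds : ∀ (a b c : V) (k m n : ℤ),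
    ∑ᶠ j : ℕ, zchoose m j • mul (m + n - j) (mul (k + j) a b) c
      = ∑ᶠ j : ℕ, ((-1 : ℂ) ^ (k + j + 1) * zchoose k j) • mul (n + k - j) b (mul (m + j) a c)
        + ∑ᶠ j : ℕ, ((-1 : ℂ) ^ (j : ℕ) * zchoose k j) • mul (m + k - j) a (mul (n + j) b c)


/-- A module `M` over a vertex algebra `V`, with mode action maps `a ↦ a_{(n)}` and a
translation operator `D_M` satisfying `[D_M, Y_M(a,z)] = (d/dz) Y_M(a,z)`, i.e.
`[D_M, a_{(n)}] = -n a_{(n-1)}`, and such that `Y_M(a,z)x` has only finitely many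
negative powers of `z`. -/
structure VModule {V : Type} [AddCommGroup V] [Module ℂ V] (A : VertexAlg V)
    (M : Type) [AddCommGroup M] [Module ℂ M] where
  act : ℤ → V →ₗ[ℂ] M →ₗ[ℂ] M
  DM : M →ₗ[ℂ] M
  trunc : ∀ (a : V) (x : M), ∃ K : ℤ, ∀ n ≥ K, act n a x = 0
  dm_comm : ∀ (n : ℤ) (a : V) (x : M),
    DM (act n a x) - act n a (DM x) = (-n : ℂ) • act (n - 1) a x

theorem stmt11_aux {V : Type} [AddCommGroup V] [Module ℂ V] (A : VertexAlg V)
    {M : Type} [AddCommGroup M] [Module ℂ M] (W : VModule A M)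
    (faithful : ∀ a : V, (∀ (n : ℤ) (x : M), W.act n a x = 0) → a = 0)
    (S : Finset ℤ) :
    ∀ a : ℤ → V, (∀ (k : ℤ) (x : M), ∑ s ∈ S, W.act (k - s) (a s) x = 0) →
    ∀ s ∈ S, a s = 0 := by
  induction S using Finset.strongInduction with
  | _ S ih =>
    intro a h s0 hs0
    -- weighted relation from the DM commutator
    have h1 : ∀ (k : ℤ) (x : M),
        ∑ s ∈ S, (((s : ℂ) - (s0 : ℂ)) • W.act (k - s) (a s) x) = 0 := by
      intro k x
      have hD : ∑ s ∈ S, (((s : ℂ) - ((k : ℂ) + 1)) • W.act (k - s) (a s) x) = 0 := by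
        have : ∑ s ∈ S, (((s : ℂ) - ((k : ℂ) + 1)) • W.act (k - s) (a s) x)
            = ∑ s ∈ S, (W.DM (W.act (k + 1 - s) (a s) x)
                - W.act (k + 1 - s) (a s) (W.DM x)) := by
          apply Finset.sum_congr rfl
          intro s _
          have := W.dm_comm (k + 1 - s) (a s) x
          rw [this]
          have h2 : k + 1 - s - 1 = k - s := by ring
          rw [h2]
          congr 1
          push_cast
          ring
        rw [this, Finset.sum_sub_distrib, ← map_sum]
        have e1 : ∑ s ∈ S, W.act (k + 1 - s) (a s) x = 0 := h (k + 1) x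
        have e2 : ∑ s ∈ S, W.act (k + 1 - s) (a s) (W.DM x) = 0 := h (k + 1) (W.DM x)
        rw [e1, e2, map_zero, sub_zero]
      have hC : ∑ s ∈ S, ((((k : ℂ) + 1) - (s0 : ℂ)) • W.act (k - s) (a s) x) = 0 := by
        rw [← Finset.smul_sum, h k x, smul_zero]
      have := congrArg₂ (· + ·) hD hC
      simpa [← Finset.sum_add_distrib, ← add_smul, sub_add_sub_cancel] using this
    -- hypothesis on the smaller set
    set S' := S.erase s0 with hS'
    set a' : ℤ → V := fun s => ((s : ℂ) - (s0 : ℂ)) • a s with ha'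
    have h' : ∀ (k : ℤ) (x : M), ∑ s ∈ S', W.act (k - s) (a' s) x = 0 := by
      intro k x
      have : ∑ s ∈ S', W.act (k - s) (a' s) x
          = ∑ s ∈ S', (((s : ℂ) - (s0 : ℂ)) • W.act (k - s) (a s) x) := by
        apply Finset.sum_congr rfl
        intro s _
        simp [ha', map_smul]
      rw [this]
      have : ∑ s ∈ S, (((s : ℂ) - (s0 : ℂ)) • W.act (k - s) (a s) x)
          = (((s0 : ℂ) - (s0 : ℂ)) • W.act (k - s0) (a s0) x)
            + ∑ s ∈ S', (((s : ℂ) - (s0 : ℂ)) • W.act (k - s) (a s) x) :=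
        (Finset.add_sum_erase S _ hs0).symm
      rw [h1 k x] at this
      simpa using this.symm
    have hsub : S' ⊂ S := Finset.erase_ssubset hs0
    have hkey := ih S' hsub a' h'
    -- a s = 0 for s ≠ s0 in S
    have hzero : ∀ s ∈ S, s ≠ s0 → a s = 0 := by
      intro s hs hne
      have := hkey s (Finset.mem_erase.mpr ⟨hne, hs⟩)
      have hne' : ((s : ℂ) - (s0 : ℂ)) ≠ 0 := by
        simp only [sub_ne_zero]
        exact_mod_cast hne
      have := congrArg (fun v => (((s : ℂ) - (s0 : ℂ))⁻¹) • v) this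
      simpa [ha', smul_smul, inv_mul_cancel₀ hne'] using this
    -- now the sum reduces to the s0 term
    apply faithful
    intro n x
    have := h (n + s0) x
    rw [Finset.sum_eq_single_of_mem s0 hs0] at this
    · simpa using this
    · intro s hs hne
      rw [hzero s hs hne]
      simp

/-- Let `M` be a module over a vertex algebra `V` and suppose a
finite sum `Σ_s z^{-s} Y_M(a^s, z) = 0` (i.e. all coefficients
`Σ_s (a^s)_{(k-s)}` vanish as operators on `M`). If `M` is a faithful `V`-module, then
`a^s = 0` for all `s`. -/
theorem stmt11 {V : Type} [AddCommGroup V] [Module ℂ V] (A : VertexAlg V)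
    {M : Type} [AddCommGroup M] [Module ℂ M] (W : VModule A M)
    (faithful : ∀ a : V, (∀ (n : ℤ) (x : M), W.act n a x = 0) → a = 0)
    (S : Finset ℤ) (a : ℤ → V)
    (h : ∀ (k : ℤ) (x : M), ∑ s ∈ S, W.act (k - s) (a s) x = 0) :
    ∀ s ∈ S, a s = 0 :=
  stmt11_aux A W faithful S a h
end
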